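/- For y ∈ (0,1), the support of the Marčenko–Pastur law with ratio y and scale 1 is [(1−√y)², (1+√y)²], and its density p(x) = (1/(2πxy))√((b−x)(x−a)) integrates to 1 over [a,b], where a = (1−√y)², b = (1+√y)². -/

import Mathlib

/-! On `(a, b)` with `0 < a`, the function
`√((b - x)(x - a)) + (a + b)/2 · arcsin((2x - a - b)/(b - a))`
`  - √(ab) · arcsin(((a + b)x - 2ab)/((b - a)x))`
is an antiderivative of `√((b - x)(x - a)) / x`, and both arcsines run from `-π/2` to `π/2`, so
`∫_a^b √((b - x)(x - a)) / x dx = π((a + b)/2 - √(ab))`. For `a = (1 - √y)²`, `b = (1 + √y)²`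
this is `π((1 + y) - (1 - y)) = 2πy`, cancelling the factor `1/(2πy)` of the density. The density
is positive exactly on `(a, b)`, whose closure is `[a, b]`. -/

open Real MeasureTheory

/-- Density (extended by 0) of the Marčenko–Pastur law with ratio `y ∈ (0,1)`, scale 1. -/
noncomputable def mpD (y x : ℝ) : ℝ :=
  if x ∈ Set.Icc ((1 - Real.sqrt y) ^ 2) ((1 + Real.sqrt y) ^ 2) then
    (1 / (2 * Real.pi * x * y)) *
      Real.sqrt (((1 + Real.sqrt y) ^ 2 - x) * (x - (1 - Real.sqrt y) ^ 2))
  else 0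

lemma HasDerivAt.arcsin_of_one_sub_sq_eq {f : ℝ → ℝ} {f' x r : ℝ} (hf : HasDerivAt f f' x)
    (hr : 0 < r) (h : 1 - f x ^ 2 = r ^ 2) :
    HasDerivAt (fun t => arcsin (f t)) (f' / r) x := by
  have hlt : f x ^ 2 < 1 := by nlinarith
  have hne₁ : f x ≠ -1 := by rintro hfx; rw [hfx] at hlt; norm_num at hlt
  have hne₂ : f x ≠ 1 := by rintro hfx; rw [hfx] at hlt; norm_num at hlt
  refine ((hasDerivAt_arcsin hne₁ hne₂).comp x hf).congr_deriv ?_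
  rw [h, sqrt_sq hr.le]
  ring

section SqrtMulDiv

variable {a b x : ℝ}

lemma hasDerivAt_sqrt_sub_mul_sub (hx : x ∈ Set.Ioo a b) :
    HasDerivAt (fun t => √((b - t) * (t - a)))
      ((a + b - 2 * x) / (2 * √((b - x) * (x - a)))) x := by
  have hpos : 0 < (b - x) * (x - a) := mul_pos (by linarith [hx.2]) (by linarith [hx.1])
  have hpoly : HasDerivAt (fun t => (b - t) * (t - a)) (a + b - 2 * x) x := by
    refine (((hasDerivAt_id x).const_sub b).mul ((hasDerivAt_id x).sub_const a)).congr_deriv ?_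
    simp only [id_eq]; ring
  exact hpoly.sqrt hpos.ne'

lemma hasDerivAt_arcsin_affine (hx : x ∈ Set.Ioo a b) :
    HasDerivAt (fun t => arcsin ((2 * t - a - b) / (b - a))) (1 / √((b - x) * (x - a))) x := by
  have hba : 0 < b - a := by linarith [hx.1, hx.2]
  have hpos : 0 < (b - x) * (x - a) := mul_pos (by linarith [hx.2]) (by linarith [hx.1])
  have hf : HasDerivAt (fun t => (2 * t - a - b) / (b - a)) (2 / (b - a)) x := by
    simpa using ((((hasDerivAt_id x).const_mul 2).sub_const a).sub_const b).div_const (b - a)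
  convert hf.arcsin_of_one_sub_sq_eq (r := 2 * √((b - x) * (x - a)) / (b - a)) (by positivity) ?_
    using 1
  · field_simp
  · simp only [div_pow, mul_pow, sq_sqrt hpos.le]
    field_simp
    ring

lemma hasDerivAt_arcsin_mobius (ha : 0 < a) (hx : x ∈ Set.Ioo a b) :
    HasDerivAt (fun t => arcsin (((a + b) * t - 2 * a * b) / ((b - a) * t)))
      (√(a * b) / (x * √((b - x) * (x - a)))) x := by
  have hx0 : 0 < x := ha.trans hx.1
  have hba : 0 < b - a := by linarith [hx.1, hx.2]
  have hab : 0 < a * b := mul_pos ha (by linarith [hx.1, hx.2])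
  have hpos : 0 < (b - x) * (x - a) := mul_pos (by linarith [hx.2]) (by linarith [hx.1])
  have hf : HasDerivAt (fun t => ((a + b) * t - 2 * a * b) / ((b - a) * t))
      (2 * a * b / ((b - a) * x ^ 2)) x := by
    refine ((((hasDerivAt_id x).const_mul (a + b)).sub_const (2 * a * b)).div
      ((hasDerivAt_id x).const_mul (b - a)) (by simp only [id_eq]; positivity)).congr_deriv ?_
    simp only [id_eq]
    field_simp
    ring
  convert hf.arcsin_of_one_sub_sq_eq
    (r := 2 * √(a * b) * √((b - x) * (x - a)) / ((b - a) * x)) (by positivity) ?_ using 1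
  · rw [eq_div_iff (by positivity)]
    field_simp
    rw [sq_sqrt hab.le]
  · simp only [div_pow, mul_pow, sq_sqrt hpos.le, sq_sqrt hab.le]
    field_simp
    ring

noncomputable def sqrtMulDivAntideriv (a b x : ℝ) : ℝ :=
  √((b - x) * (x - a)) + (a + b) / 2 * arcsin ((2 * x - a - b) / (b - a))
    - √(a * b) * arcsin (((a + b) * x - 2 * a * b) / ((b - a) * x))

lemma hasDerivAt_sqrtMulDivAntideriv (ha : 0 < a) (hx : x ∈ Set.Ioo a b) :
    HasDerivAt (sqrtMulDivAntideriv a b) (√((b - x) * (x - a)) / x) x := by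
  have hx0 : 0 < x := ha.trans hx.1
  have hpos : 0 < (b - x) * (x - a) := mul_pos (by linarith [hx.2]) (by linarith [hx.1])
  have hab : 0 < a * b := mul_pos ha (by linarith [hx.1, hx.2])
  refine (((hasDerivAt_sqrt_sub_mul_sub hx).add ((hasDerivAt_arcsin_affine hx).const_mul _)).sub
    ((hasDerivAt_arcsin_mobius ha hx).const_mul _)).congr_deriv ?_
  have hsq := sq_sqrt hpos.le
  have hsq' := sq_sqrt hab.le
  field_simp
  linear_combination (-2) * hsq' - 2 * hsq

lemma continuousOn_sqrtMulDivAntideriv (ha : 0 < a) (hab : a < b) :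
    ContinuousOn (sqrtMulDivAntideriv a b) (Set.Icc a b) := by
  have hden : ∀ t ∈ Set.Icc a b, (b - a) * t ≠ 0 := fun t ht =>
    (mul_pos (sub_pos.2 hab) (ha.trans_le ht.1)).ne'
  unfold sqrtMulDivAntideriv
  fun_prop (disch := assumption)

lemma sqrtMulDivAntideriv_right (ha : 0 < a) (hab : a < b) :
    sqrtMulDivAntideriv a b b = π / 2 * ((a + b) / 2 - √(a * b)) := by
  have hba : b - a ≠ 0 := (sub_pos.2 hab).ne'
  have hb : b ≠ 0 := (ha.trans hab).ne'
  have h₁ : (2 * b - a - b) / (b - a) = 1 := by rw [div_eq_one_iff_eq hba]; ring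
  have h₂ : ((a + b) * b - 2 * a * b) / ((b - a) * b) = 1 := by
    rw [div_eq_one_iff_eq (mul_ne_zero hba hb)]; ring
  simp only [sqrtMulDivAntideriv, h₁, h₂, arcsin_one, sub_self, zero_mul, sqrt_zero]
  ring

lemma sqrtMulDivAntideriv_left (ha : 0 < a) (hab : a < b) :
    sqrtMulDivAntideriv a b a = -(π / 2 * ((a + b) / 2 - √(a * b))) := by
  have hba : b - a ≠ 0 := (sub_pos.2 hab).ne'
  have h₁ : (2 * a - a - b) / (b - a) = -1 := by rw [div_eq_iff hba]; ring
  have h₂ : ((a + b) * a - 2 * a * b) / ((b - a) * a) = -1 := by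
    rw [div_eq_iff (mul_ne_zero hba ha.ne')]; ring
  simp only [sqrtMulDivAntideriv, h₁, h₂, arcsin_neg_one, sub_self, mul_zero, sqrt_zero]
  ring

theorem integral_sqrt_sub_mul_sub_div (ha : 0 < a) (hab : a < b) :
    ∫ x in a..b, √((b - x) * (x - a)) / x = π * ((a + b) / 2 - √(a * b)) := by
  have hint : IntervalIntegrable (fun x => √((b - x) * (x - a)) / x) volume a b := by
    refine ContinuousOn.intervalIntegrable ?_
    rw [Set.uIcc_of_le hab.le]
    exact ContinuousOn.div (by fun_prop) continuousOn_id fun x hx => (ha.trans_le hx.1).ne'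
  rw [intervalIntegral.integral_eq_sub_of_hasDerivAt_of_le hab.le
    (continuousOn_sqrtMulDivAntideriv ha hab) (fun x hx => hasDerivAt_sqrtMulDivAntideriv ha hx)
    hint, sqrtMulDivAntideriv_right ha hab, sqrtMulDivAntideriv_left ha hab]
  ring

end SqrtMulDiv

lemma mpD_eq_indicator (y : ℝ) :
    mpD y = (Set.Icc ((1 - √y) ^ 2) ((1 + √y) ^ 2)).indicator
      fun x => (2 * π * y)⁻¹ * (√(((1 + √y) ^ 2 - x) * (x - (1 - √y) ^ 2)) / x) := by
  funext x
  rw [mpD, Set.indicator]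
  congr 1
  rw [one_div, div_eq_mul_inv, mul_inv, mul_inv]
  ring

theorem integral_mpD {y : ℝ} (hy : y ∈ Set.Ioo (0 : ℝ) 1) : ∫ x, mpD y x = 1 := by
  have hs₀ : 0 < √y := sqrt_pos.2 hy.1
  have hs₁ : √y < 1 := (sqrt_lt' one_pos).2 (by simpa using hy.2)
  have hy₂ : √y ^ 2 = y := sq_sqrt hy.1.le
  have hab : (1 - √y) ^ 2 < (1 + √y) ^ 2 := by nlinarith
  have hgeom : √((1 - √y) ^ 2 * (1 + √y) ^ 2) = 1 - y := by
    rw [← mul_pow, sqrt_sq (by nlinarith)]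
    linear_combination -hy₂
  rw [mpD_eq_indicator, integral_indicator measurableSet_Icc, integral_Icc_eq_integral_Ioc,
    ← intervalIntegral.integral_of_le hab.le, intervalIntegral.integral_const_mul,
    integral_sqrt_sub_mul_sub_div (by nlinarith) hab, hgeom]
  field_simp
  rw [div_eq_iff hy.1.ne']
  linear_combination 2 * hy₂

lemma mpD_ne_zero_iff {y x : ℝ} (hy : 0 < y) :
    mpD y x ≠ 0 ↔ x ∈ Set.Ioo ((1 - √y) ^ 2) ((1 + √y) ^ 2) := by
  rw [mpD_eq_indicator, Set.indicator_apply_ne_zero, Set.mem_inter_iff, Function.mem_support]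
  constructor
  · rintro ⟨hx, hne⟩
    refine ⟨lt_of_le_of_ne hx.1 ?_, lt_of_le_of_ne hx.2 ?_⟩ <;>
      rintro rfl <;> simp at hne
  · intro hx
    have hx₀ : 0 < x := (sq_nonneg _).trans_lt hx.1
    have hpos : 0 < ((1 + √y) ^ 2 - x) * (x - (1 - √y) ^ 2) :=
      mul_pos (sub_pos.2 hx.2) (sub_pos.2 hx.1)
    exact ⟨Set.Ioo_subset_Icc_self hx, by positivity⟩

/-- For `y ∈ (0,1)`, the Marčenko–Pastur density integrates to 1 and its support is
`[(1-√y)², (1+√y)²]`. -/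
theorem mp_density_support_and_mass (y : ℝ) (hy : y ∈ Set.Ioo (0 : ℝ) 1) :
    (∫ x, mpD y x) = 1 ∧
    closure {x | mpD y x ≠ 0} =
      Set.Icc ((1 - Real.sqrt y) ^ 2) ((1 + Real.sqrt y) ^ 2) := by
  have hs₀ : 0 < √y := sqrt_pos.2 hy.1
  have hab : (1 - √y) ^ 2 ≠ (1 + √y) ^ 2 := by nlinarith
  refine ⟨integral_mpD hy, ?_⟩
  have hsupp : {x | mpD y x ≠ 0} = Set.Ioo ((1 - √y) ^ 2) ((1 + √y) ^ 2) :=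
    Set.ext fun x => mpD_ne_zero_iff hy.1
  rw [hsupp, closure_Ioo hab]
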